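/- arXiv:1305.2444 — 2 statements merged into one kernel-verified Lean document; each statement's English description precedes it below -/
import Mathlib

section
/- Let K ⊆ ℝ² be a closed convex set with at most one recession direction (i.e., the set of unit vectors that are limits of x_n/‖x_n‖ for sequences x_n ∈ K with ‖x_n‖ → ∞ has at most one element). Then the boundary ∂K is homogenization-convex: the closure of {τx : τ ≥ 0, x ∈ ∂K} is convex. -/
/-- The homogeneous hull of a set: `{τ • x : τ ≥ 0, x ∈ C}`. -/
def homHull (C : Set (ℝ × ℝ)) : Set (ℝ × ℝ) :=
  {y | ∃ τ : ℝ, 0 ≤ τ ∧ ∃ x ∈ C, y = τ • x}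

/-- The set of recession directions of `C`: unit vectors that are approximated by
spherical projections of arbitrarily large elements of `C`. -/
def recDirections (C : Set (ℝ × ℝ)) : Set (ℝ × ℝ) :=
  {s | ‖s‖ = 1 ∧ ∀ τ ε : ℝ, 0 < τ → 0 < ε →
    ∃ x ∈ C, τ < ‖x‖ ∧ ‖s - ‖x‖⁻¹ • x‖ < ε}

/-!
For `y ≠ 0` in the interior of `K`, push `y` sideways to `y ± c • w` with `w` independent of `y`
and `c` small. These two points lie in `K` and span different rays, so at most one of the rays
stays in `K`; the other leaves `K` and, by connectedness, crosses `∂K`, which puts the point on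
the cone over `∂K`. Letting `c → 0` shows `K ⊆ closure (homHull ∂K)`, hence the closures of the
cones over `∂K` and over `K` coincide, and the latter is convex because `K` is.
-/

open Set Filter Topology

lemma homHull_mono {C D : Set (ℝ × ℝ)} (h : C ⊆ D) : homHull C ⊆ homHull D :=
  fun _ ⟨τ, hτ, x, hx, hy⟩ => ⟨τ, hτ, x, h hx, hy⟩

lemma smul_mem_homHull {C : Set (ℝ × ℝ)} {τ : ℝ} (hτ : 0 ≤ τ) {y : ℝ × ℝ}
    (hy : y ∈ homHull C) : τ • y ∈ homHull C := by
  obtain ⟨σ, hσ, x, hx, rfl⟩ := hy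
  exact ⟨τ * σ, mul_nonneg hτ hσ, x, hx, smul_smul τ σ x⟩

lemma add_mem_homHull {C : Set (ℝ × ℝ)} (hC : Convex ℝ C) {p q : ℝ × ℝ}
    (hp : p ∈ homHull C) (hq : q ∈ homHull C) : p + q ∈ homHull C := by
  obtain ⟨τ₁, hτ₁, x₁, hx₁, rfl⟩ := hp
  obtain ⟨τ₂, hτ₂, x₂, hx₂, rfl⟩ := hq
  rcases (add_nonneg hτ₁ hτ₂).eq_or_lt with hτ | hτ
  · obtain ⟨rfl, rfl⟩ := (add_eq_zero_iff_of_nonneg hτ₁ hτ₂).1 hτ.symm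
    exact ⟨0, le_rfl, x₁, hx₁, by simp⟩
  · refine ⟨τ₁ + τ₂, hτ.le, _, convex_iff_div.1 hC hx₁ hx₂ hτ₁ hτ₂ hτ, ?_⟩
    simp only [smul_add, smul_smul, mul_div_cancel₀ _ hτ.ne']

lemma convex_homHull {C : Set (ℝ × ℝ)} (hC : Convex ℝ C) : Convex ℝ (homHull C) :=
  fun _ hp _ hq _ _ ha hb _ =>
    add_mem_homHull hC (smul_mem_homHull ha hp) (smul_mem_homHull hb hq)

lemma closure_homHull_subset {C D : Set (ℝ × ℝ)} (h : C ⊆ closure (homHull D)) :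
    closure (homHull C) ⊆ closure (homHull D) := by
  refine closure_minimal ?_ isClosed_closure
  rintro _ ⟨τ, hτ, x, hx, rfl⟩
  exact map_mem_closure (continuous_const_smul τ) (h hx) fun _ => smul_mem_homHull hτ

lemma smul_mem_of_notMem_homHull_frontier {K : Set (ℝ × ℝ)} {y : ℝ × ℝ} (hy : y ∈ K)
    (hy' : y ∉ homHull (frontier K)) {t : ℝ} (ht : 0 < t) : t • y ∈ K := by
  by_contra hty
  have := Subtype.preconnectedSpace (isPreconnected_uIcc (a := (1 : ℝ)) (b := t))
  let f : uIcc (1 : ℝ) t → ℝ × ℝ := fun s => (s : ℝ) • y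
  have hf : Continuous f := by fun_prop
  have hne : (f ⁻¹' K).Nonempty := ⟨⟨1, left_mem_uIcc⟩, by simpa [f]⟩
  have hne' : f ⁻¹' K ≠ univ := fun h =>
    hty (h.ge (mem_univ (⟨t, right_mem_uIcc⟩ : uIcc (1 : ℝ) t)))
  obtain ⟨s, hs⟩ := nonempty_frontier_iff.2 ⟨hne, hne'⟩
  have hs0 : 0 < (s : ℝ) := (lt_min one_pos ht).trans_le s.2.1
  exact hy' ⟨(s : ℝ)⁻¹, inv_nonneg.2 hs0.le, f s, hf.frontier_preimage_subset K hs,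
    (inv_smul_smul₀ hs0.ne' y).symm⟩

lemma mem_recDirections_of_forall_smul_mem {K : Set (ℝ × ℝ)} {y : ℝ × ℝ} (hy : y ≠ 0)
    (hray : ∀ t : ℝ, 0 < t → t • y ∈ K) : ‖y‖⁻¹ • y ∈ recDirections K := by
  refine ⟨norm_smul_inv_norm hy, fun τ ε _ hε => ?_⟩
  have ht : 0 < (τ + 1) / ‖y‖ := by positivity
  refine ⟨((τ + 1) / ‖y‖) • y, hray _ ht, ?_, ?_⟩
  · rw [norm_smul, Real.norm_of_nonneg ht.le, div_mul_cancel₀ _ (norm_ne_zero_iff.2 hy)]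
    exact lt_add_one τ
  · rw [← (sameRay_iff_inv_norm_smul_eq_of_ne hy (smul_ne_zero ht.ne' hy)).1
      (SameRay.sameRay_pos_smul_right y ht), sub_self, norm_zero]
    exact hε

lemma sameRay_of_forall_smul_mem {K : Set (ℝ × ℝ)} (hrec : (recDirections K).Subsingleton)
    {x y : ℝ × ℝ} (hx : ∀ t : ℝ, 0 < t → t • x ∈ K) (hy : ∀ t : ℝ, 0 < t → t • y ∈ K) :
    SameRay ℝ x y := by
  rcases eq_or_ne x 0 with rfl | hx0
  · exact SameRay.zero_left y
  rcases eq_or_ne y 0 with rfl | hy0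
  · exact SameRay.zero_right x
  exact (sameRay_iff_inv_norm_smul_eq_of_ne hx0 hy0).2 <|
    hrec (mem_recDirections_of_forall_smul_mem hx0 hx) (mem_recDirections_of_forall_smul_mem hy0 hy)

lemma not_sameRay_add_smul_sub_smul {R M : Type*} [Field R] [LinearOrder R]
    [IsStrictOrderedRing R] [AddCommGroup M] [Module R M] {x v : M}
    (h : LinearIndependent R ![x, v]) {c : R} (hc : c ≠ 0) :
    ¬SameRay R (x + c • v) (x - c • v) := by
  rw [LinearIndependent.pair_iff] at h
  rintro (h0 | h0 | ⟨r₁, r₂, hr₁, hr₂, hr⟩)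
  · exact one_ne_zero (h 1 c (by simpa using h0)).1
  · exact one_ne_zero (h 1 (-c) (by simpa [sub_eq_add_neg] using h0)).1
  · exact mul_ne_zero (add_pos hr₁ hr₂).ne' hc
      (h (r₁ - r₂) ((r₁ + r₂) * c) (by linear_combination (norm := module) hr)).2

lemma mem_closure_homHull_frontier_of_mem_interior {K : Set (ℝ × ℝ)}
    (hrec : (recDirections K).Subsingleton) {y : ℝ × ℝ} (hy : y ∈ interior K) (hy0 : y ≠ 0) :
    y ∈ closure (homHull (frontier K)) := by
  obtain ⟨w, hw⟩ := exists_linearIndependent_pair_of_one_lt_finrank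
    (by simp [Module.finrank_prod] : 1 < Module.finrank ℝ (ℝ × ℝ)) hy0
  have hplus : Tendsto (fun c : ℝ => y + c • w) (𝓝[≠] 0) (𝓝 y) :=
    ((by fun_prop : Continuous fun c : ℝ => y + c • w).tendsto' 0 y (by simp)).mono_left
      nhdsWithin_le_nhds
  have hminus : Tendsto (fun c : ℝ => y - c • w) (𝓝[≠] 0) (𝓝 y) :=
    ((by fun_prop : Continuous fun c : ℝ => y - c • w).tendsto' 0 y (by simp)).mono_left
      nhdsWithin_le_nhds
  have hK := mem_interior_iff_mem_nhds.1 hy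
  have hexit : ∀ᶠ c in 𝓝[≠] (0 : ℝ),
      y + c • w ∈ homHull (frontier K) ∨ y - c • w ∈ homHull (frontier K) := by
    filter_upwards [self_mem_nhdsWithin, hplus.eventually hK, hminus.eventually hK]
      with c hc hpK hmK
    by_contra! h
    exact not_sameRay_add_smul_sub_smul hw hc <| sameRay_of_forall_smul_mem hrec
      (fun _ => smul_mem_of_notMem_homHull_frontier hpK h.1)
      (fun _ => smul_mem_of_notMem_homHull_frontier hmK h.2)
  rcases frequently_or_distrib.1 hexit.frequently with h | h
  · exact mem_closure_of_frequently_of_tendsto h hplus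
  · exact mem_closure_of_frequently_of_tendsto h hminus

lemma subset_closure_homHull_frontier {K : Set (ℝ × ℝ)} (hrec : (recDirections K).Subsingleton)
    (hfr : (frontier K).Nonempty) : K ⊆ closure (homHull (frontier K)) := by
  intro y hy
  by_cases hyf : y ∈ frontier K
  · exact subset_closure ⟨1, zero_le_one, y, hyf, (one_smul ℝ y).symm⟩
  rcases eq_or_ne y 0 with rfl | hy0
  · obtain ⟨z, hz⟩ := hfr
    exact subset_closure ⟨0, le_rfl, z, hz, (zero_smul ℝ z).symm⟩
  exact mem_closure_homHull_frontier_of_mem_interior hrec (self_sdiff_frontier K ▸ ⟨hy, hyf⟩) hy0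

/-- If `K ⊆ ℝ²` is closed and convex with at most one recession direction, then its
boundary is homogenization-convex. -/
theorem frontier_homogenizationConvex_of_subsingleton_recDirections
    (K : Set (ℝ × ℝ)) (hKcl : IsClosed K) (hKcv : Convex ℝ K)
    (hrec : (recDirections K).Subsingleton) :
    Convex ℝ (closure (homHull (frontier K))) := by
  rcases (frontier K).eq_empty_or_nonempty with hfr | hfr
  · rw [show homHull (frontier K) = ∅ by simp [homHull, hfr], closure_empty]
    exact convex_empty
  have hcl : closure (homHull (frontier K)) = closure (homHull K) :=
    (closure_mono (homHull_mono hKcl.frontier_subset)).antisymm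
      (closure_homHull_subset (subset_closure_homHull_frontier hrec hfr))
  rw [hcl]
  exact (convex_homHull hKcv).closure
end

section
/- (S-Lemma in Hilbert space) Let V be a real Hilbert space and g, h : V → ℝ continuous quadratic functions g(x) = c_g + 2⟨v_g, x⟩ + ⟨x, M_g x⟩ and h(x) = c_h + 2⟨v_h, x⟩ + ⟨x, M_h x⟩ with M_g, M_h self-adjoint bounded operators, v_g, v_h ∈ V, c_g, c_h ∈ ℝ. Suppose h(x₀) > 0 for some x₀ ∈ V. Then g(x) ≥ 0 for all x ∈ V with h(x) ≥ 0 if and only if there exists ξ ≥ 0 such that g(x) − ξh(x) ≥ 0 for all x ∈ V. -/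
/-!
Homogenize: `g` and `h` are the restrictions to `t = 1` of quadratic forms `G`, `H` on `V × ℝ`,
and `h ≥ 0 → g ≥ 0` lifts to `H > 0 → G ≥ 0` on all of `V × ℝ` (by scaling off `t = 0`, by
continuity on it). By Dines' theorem the joint range `{(G z, H z)}` is a convex cone in `ℝ²`.
It misses the open quadrant `{a < 0 < b}`, so a line separates them: `ν H ≤ μ G` with `μ, ν ≥ 0`
not both zero. The Slater point `x₀` forces `μ > 0`, and `ξ = ν / μ` works.
-/

open Set Filter Topology
open scoped RealInnerProductSpace

theorem Prod.exists_eq_smul_of_mul_sub_mul_eq_zero {S p : ℝ × ℝ} (hS : S ≠ 0)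
    (h : S.1 * p.2 - S.2 * p.1 = 0) : ∃ s : ℝ, p = s • S := by
  obtain ⟨a, b⟩ := S
  obtain ⟨c, d⟩ := p
  have hpos : 0 < a * a + b * b := by
    by_cases ha : a = 0
    · have hb : b ≠ 0 := fun hb => hS (by rw [ha, hb]; rfl)
      exact add_pos_of_nonneg_of_pos (mul_self_nonneg a) (mul_self_pos.2 hb)
    · exact add_pos_of_pos_of_nonneg (mul_self_pos.2 ha) (mul_self_nonneg b)
  refine ⟨(a * c + b * d) / (a * a + b * b), Prod.ext ?_ ?_⟩ <;>
    simp only [Prod.smul_mk, smul_eq_mul, div_mul_eq_mul_div, eq_div_iff hpos.ne'] at h ⊢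
  · linear_combination (-b) * h
  · linear_combination a * h

namespace QuadraticMap

section CommRing

variable {R M N P : Type*} [CommRing R] [AddCommGroup M] [Module R M]
  [AddCommGroup N] [Module R N] [AddCommGroup P] [Module R P]

def pair (Q₁ : QuadraticMap R M N) (Q₂ : QuadraticMap R M P) : QuadraticMap R M (N × P) :=
  (LinearMap.inl R N P).compQuadraticMap Q₁ + (LinearMap.inr R N P).compQuadraticMap Q₂

@[simp]
theorem pair_apply (Q₁ : QuadraticMap R M N) (Q₂ : QuadraticMap R M P) (x : M) :
    pair Q₁ Q₂ x = (Q₁ x, Q₂ x) := by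
  simp [pair]

theorem map_smul_add_smul (Q : QuadraticMap R M N) (a b : R) (x y : M) :
    Q (a • x + b • y) = (a * a) • Q x + (b * b) • Q y + (a * b) • polar Q x y := by
  rw [QuadraticMap.map_add Q, Q.map_smul, Q.map_smul, polar_smul_left, polar_smul_right, smul_smul]

theorem map_smul_add_smul_add_map_neg_smul_add_smul (Q : QuadraticMap R M N) (a b : R)
    (x y : M) :
    Q (a • x + b • y) + Q (-b • x + a • y) = (a * a + b * b) • (Q x + Q y) := by
  rw [map_smul_add_smul, map_smul_add_smul]
  module

end CommRing

variable {E N : Type*} [AddCommGroup E] [Module ℝ E] [AddCommGroup N] [Module ℝ N]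

theorem continuous_apply_add_smul (Q : QuadraticForm ℝ E) (x y : E) :
    Continuous fun s : ℝ => Q (x + s • y) := by
  have hQ (s : ℝ) : Q (x + s • y) = Q x + s * s * Q y + s * polar Q x y := by
    simpa using map_smul_add_smul Q 1 s x y
  simp only [hQ]
  fun_prop

theorem exists_map_smul_add_smul_eq_zero (q : QuadraticForm ℝ E) {x y : E}
    (h : q x + q y = 0) : ∃ a b : ℝ, 0 < a * a + b * b ∧ q (a • x + b • y) = 0 := by
  -- `q (a • x + b • y) = α (a² - b²) + γ a b`, and `(√(γ² + 4α²) - γ, 2α)` is a root.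
  simp_rw [map_smul_add_smul, smul_eq_mul, eq_neg_of_add_eq_zero_right h]
  set α := q x
  set γ := polar q x y
  by_cases hα : α = 0
  · exact ⟨1, 0, by norm_num, by rw [hα]; ring⟩
  have hD := Real.mul_self_sqrt (add_nonneg (mul_self_nonneg γ) (mul_self_nonneg (2 * α)))
  refine ⟨√(γ * γ + 2 * α * (2 * α)) - γ, 2 * α,
    add_pos_of_nonneg_of_pos (mul_self_nonneg _) (mul_self_pos.2 (by simpa using hα)), ?_⟩
  linear_combination α * hD

theorem smul_mem_range (Q : QuadraticMap ℝ E N) {t : ℝ} (ht : 0 ≤ t) (x : E) :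
    t • Q x ∈ range Q :=
  ⟨√t • x, by rw [Q.map_smul, Real.mul_self_sqrt ht]⟩

theorem add_mem_range (Q : QuadraticMap ℝ E (ℝ × ℝ)) (x y : E) : Q x + Q y ∈ range Q := by
  set S := Q x + Q y
  obtain hS | hS := eq_or_ne S 0
  · exact ⟨0, by rw [map_zero, hS]⟩
  have mem_of_eq_smul {z : E} {s : ℝ} (hs : 0 < s) (hz : Q z = s • S) : S ∈ range Q := by
    simpa [hz, smul_smul, inv_mul_cancel₀ hs.ne'] using smul_mem_range Q (inv_nonneg.2 hs.le) z
  -- Make `Q (a • x + b • y)` parallel to `S`; the rotated point `(-b, a)` then gives the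
  -- complementary multiple of `S`, and one of the two multiples is positive.
  let cross : ℝ × ℝ →ₗ[ℝ] ℝ := S.1 • LinearMap.snd ℝ ℝ ℝ - S.2 • LinearMap.fst ℝ ℝ ℝ
  have hcross (p : ℝ × ℝ) : cross p = S.1 * p.2 - S.2 * p.1 := rfl
  obtain ⟨a, b, hab, hab_zero⟩ := exists_map_smul_add_smul_eq_zero (cross.compQuadraticMap Q)
    (x := x) (y := y) (by
      simp only [LinearMap.compQuadraticMap_apply, hcross, Prod.fst_add, Prod.snd_add, S]; ring)
  obtain ⟨s, hs⟩ := Prod.exists_eq_smul_of_mul_sub_mul_eq_zero hS (p := Q (a • x + b • y))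
    (by simpa [hcross] using hab_zero)
  have hrot : Q (-b • x + a • y) = (a * a + b * b - s) • S := by
    rw [sub_smul, ← hs, eq_sub_iff_add_eq', map_smul_add_smul_add_map_neg_smul_add_smul]
  rcases lt_or_ge 0 s with hs_pos | hs_nonpos
  · exact mem_of_eq_smul hs_pos hs
  · exact mem_of_eq_smul (by linarith) hrot

def rangeCone (Q : QuadraticMap ℝ E (ℝ × ℝ)) : ConvexCone ℝ (ℝ × ℝ) where
  carrier := range Q
  smul_mem' _ hc _ := by
    rintro ⟨x, rfl⟩
    exact smul_mem_range Q hc.le x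
  add_mem' _ := by
    rintro ⟨x, rfl⟩ _ ⟨y, rfl⟩
    exact add_mem_range Q x y

theorem pointed_rangeCone (Q : QuadraticMap ℝ E (ℝ × ℝ)) : (rangeCone Q).Pointed :=
  ⟨0, map_zero Q⟩

end QuadraticMap

theorem ConvexCone.exists_separating_of_disjoint_quadrant (K : ConvexCone ℝ (ℝ × ℝ))
    (hK : K.Pointed) (hdisj : Disjoint (Iio 0 ×ˢ Ioi 0) (K : Set (ℝ × ℝ))) :
    ∃ μ ν : ℝ, 0 ≤ μ ∧ 0 ≤ ν ∧ 0 < μ + ν ∧ ∀ k ∈ K, ν * k.2 ≤ μ * k.1 := by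
  obtain ⟨f, u, hf_lt, hf_ge⟩ := geometric_hahn_banach_open ((convex_Iio 0).prod (convex_Ioi 0))
    (isOpen_Iio.prod isOpen_Ioi) K.convex hdisj
  have hu : u ≤ 0 := by simpa using hf_ge 0 hK
  have hf_closure : ∀ c ∈ Iic 0 ×ˢ Ici 0, f c ≤ 0 := by
    rw [← closure_Iio, ← closure_Ioi, ← closure_prod_eq]
    exact fun c hc => closure_minimal (fun c hc => ((hf_lt c hc).trans_le hu).le)
      (isClosed_le f.continuous continuous_const) hc
  have hf (a b : ℝ) : f (a, b) = a * f (1, 0) + b * f (0, 1) := by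
    rw [← smul_eq_mul, ← smul_eq_mul, ← map_smul, ← map_smul, ← map_add]
    simp
  refine ⟨f (1, 0), -f (0, 1), ?_, ?_, ?_, fun k hk => ?_⟩
  · have h := hf_closure (-1, 0) (by simp)
    rw [hf] at h
    linarith
  · simpa using hf_closure (0, 1) (by simp)
  · have h := hf_lt (-1, 1) (by simp)
    rw [hf] at h
    linarith
  · suffices 0 ≤ f k by rw [← Prod.mk.eta (p := k), hf] at this; linarith
    by_contra! hneg
    have := hf_ge _ (K.smul_mem (div_pos_of_neg_of_neg (a := u - 1) (by linarith) hneg) hk)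
    rw [map_smul, smul_eq_mul, div_mul_cancel₀ _ hneg.ne] at this
    linarith

theorem QuadraticForm.nonneg_of_pos_of_slice {E : Type*} [AddCommGroup E] [Module ℝ E]
    (G H : QuadraticForm ℝ (E × ℝ)) (h : ∀ x, 0 ≤ H (x, 1) → 0 ≤ G (x, 1)) {z : E × ℝ}
    (hz : 0 < H z) : 0 ≤ G z := by
  have off_zero {x : E} {t : ℝ} (ht : t ≠ 0) (hpos : 0 < H (x, t)) : 0 ≤ G (x, t) := by
    have hscale (Q : QuadraticForm ℝ (E × ℝ)) : Q (x, t) = t * t * Q (t⁻¹ • x, 1) := by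
      rw [← smul_eq_mul, ← Q.map_smul, Prod.smul_mk, smul_inv_smul₀ ht, smul_eq_mul, mul_one]
    rw [hscale] at hpos ⊢
    exact mul_nonneg (mul_self_nonneg t) (h _ (pos_of_mul_pos_right hpos (mul_self_nonneg t)).le)
  obtain ⟨x, t⟩ := z
  obtain ht | rfl := ne_or_eq t 0
  · exact off_zero ht hz
  have hline (Q : QuadraticForm ℝ (E × ℝ)) :
      Tendsto (fun s : ℝ => Q (x, s)) (𝓝[≠] 0) (𝓝 (Q (x, 0))) := by
    simpa using ((QuadraticMap.continuous_apply_add_smul Q (x, 0) (0, 1)).tendsto 0).mono_left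
      nhdsWithin_le_nhds
  refine ge_of_tendsto (hline G) ?_
  filter_upwards [self_mem_nhdsWithin, (hline H).eventually (lt_mem_nhds hz)] with s hs hHs
  exact off_zero hs hHs

section Homogenization

variable {V : Type*} [NormedAddCommGroup V] [InnerProductSpace ℝ V]

def homogenization (M : V →ₗ[ℝ] V) (v : V) (c : ℝ) : QuadraticForm ℝ (V × ℝ) :=
  LinearMap.BilinMap.toQuadraticMap <| LinearMap.mk₂ ℝ
    (fun z w : V × ℝ => c * z.2 * w.2 + 2 * z.2 * ⟪v, w.1⟫ + ⟪z.1, M w.1⟫)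
    (fun _ _ _ => by simp only [Prod.fst_add, Prod.snd_add, inner_add_left]; ring)
    (fun _ _ _ => by
      simp only [Prod.smul_fst, Prod.smul_snd, real_inner_smul_left, smul_eq_mul]; ring)
    (fun _ _ _ => by simp only [Prod.fst_add, Prod.snd_add, map_add, inner_add_right]; ring)
    (fun _ _ _ => by
      simp only [Prod.smul_fst, Prod.smul_snd, map_smul, real_inner_smul_right, smul_eq_mul]; ring)

theorem homogenization_apply_one (M : V →ₗ[ℝ] V) (v : V) (c : ℝ) (x : V) :
    homogenization M v c (x, 1) = c + 2 * ⟪v, x⟫ + ⟪x, M x⟫ := by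
  simp [homogenization]

end Homogenization

theorem s_lemma_hilbert_general {V : Type*} [NormedAddCommGroup V]
    [InnerProductSpace ℝ V]
    (Mg Mh : V →L[ℝ] V)
    (vg vh : V) (cg ch : ℝ)
    (x₀ : V) (hx₀ : 0 < ch + 2 * (inner ℝ vh x₀ : ℝ) + (inner ℝ x₀ (Mh x₀) : ℝ)) :
    (∀ x : V, 0 ≤ ch + 2 * (inner ℝ vh x : ℝ) + (inner ℝ x (Mh x) : ℝ) →
        0 ≤ cg + 2 * (inner ℝ vg x : ℝ) + (inner ℝ x (Mg x) : ℝ)) ↔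
      ∃ ξ : ℝ, 0 ≤ ξ ∧ ∀ x : V,
        0 ≤ (cg + 2 * (inner ℝ vg x : ℝ) + (inner ℝ x (Mg x) : ℝ))
            - ξ * (ch + 2 * (inner ℝ vh x : ℝ) + (inner ℝ x (Mh x) : ℝ)) := by
  set G := homogenization (Mg : V →ₗ[ℝ] V) vg cg
  set H := homogenization (Mh : V →ₗ[ℝ] V) vh ch
  have hG (x : V) : G (x, 1) = cg + 2 * ⟪vg, x⟫ + ⟪x, Mg x⟫ := homogenization_apply_one _ _ _ x
  have hH (x : V) : H (x, 1) = ch + 2 * ⟪vh, x⟫ + ⟪x, Mh x⟫ := homogenization_apply_one _ _ _ x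
  constructor
  · intro hcop
    have hdisj : Disjoint (Iio 0 ×ˢ Ioi 0) ((QuadraticMap.pair G H).rangeCone : Set (ℝ × ℝ)) := by
      rw [Set.disjoint_left]
      rintro _ ⟨hG_neg, hH_pos⟩ ⟨z, rfl⟩
      simp only [QuadraticMap.pair_apply] at hG_neg hH_pos
      exact (G.nonneg_of_pos_of_slice H (by simpa only [hG, hH] using hcop) hH_pos).not_gt hG_neg
    obtain ⟨μ, ν, hμ, hν, hμν, hsep⟩ := ConvexCone.exists_separating_of_disjoint_quadrant _
      (QuadraticMap.pointed_rangeCone _) hdisj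
    have hsep' (x : V) : ν * H (x, 1) ≤ μ * G (x, 1) := by simpa using hsep _ ⟨(x, 1), rfl⟩
    have hμ_pos : 0 < μ := by
      refine lt_of_le_of_ne hμ fun hμ0 => ?_
      have := hsep' x₀
      rw [← hμ0, hH] at this
      nlinarith
    refine ⟨ν / μ, div_nonneg hν hμ, fun x => ?_⟩
    rw [sub_nonneg, div_mul_eq_mul_div, div_le_iff₀' hμ_pos, ← hG, ← hH]
    exact hsep' x
  · rintro ⟨ξ, hξ, hall⟩ x hx
    nlinarith [hall x, mul_nonneg hξ hx]

/-- S-Lemma in a real Hilbert space: for continuous quadratic functions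
`g x = c_g + 2⟨v_g, x⟩ + ⟨x, M_g x⟩` and `h x = c_h + 2⟨v_h, x⟩ + ⟨x, M_h x⟩` with
`M_g, M_h` bounded self-adjoint, if `h x₀ > 0` for some `x₀`, then `g` is copositive
with `h` iff there exists `ξ ≥ 0` with `g - ξh ≥ 0` everywhere. -/
theorem s_lemma_hilbert {V : Type*} [NormedAddCommGroup V]
    [InnerProductSpace ℝ V] [CompleteSpace V]
    (Mg Mh : V →L[ℝ] V)
    (hMg : ∀ x y : V, (inner ℝ (Mg x) y : ℝ) = inner ℝ x (Mg y))
    (hMh : ∀ x y : V, (inner ℝ (Mh x) y : ℝ) = inner ℝ x (Mh y))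
    (vg vh : V) (cg ch : ℝ)
    (x₀ : V) (hx₀ : 0 < ch + 2 * (inner ℝ vh x₀ : ℝ) + (inner ℝ x₀ (Mh x₀) : ℝ)) :
    (∀ x : V, 0 ≤ ch + 2 * (inner ℝ vh x : ℝ) + (inner ℝ x (Mh x) : ℝ) →
        0 ≤ cg + 2 * (inner ℝ vg x : ℝ) + (inner ℝ x (Mg x) : ℝ)) ↔
      ∃ ξ : ℝ, 0 ≤ ξ ∧ ∀ x : V,
        0 ≤ (cg + 2 * (inner ℝ vg x : ℝ) + (inner ℝ x (Mg x) : ℝ))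
            - ξ * (ch + 2 * (inner ℝ vh x : ℝ) + (inner ℝ x (Mh x) : ℝ)) :=
  s_lemma_hilbert_general Mg Mh vg vh cg ch x₀ hx₀
end
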